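/- arXiv:1909.09791 — 3 statements merged into one kernel-verified Lean document; each statement's English description precedes it below -/
import Mathlib

section
/- Let L and W be real symmetric n×n matrices with eigenvalues λ_1 ≤ ... ≤ λ_n and μ_1 ≤ ... ≤ μ_n respectively. Then for every orthogonal matrix X, tr(X^T L X W) ≥ Σ_{i=1}^n λ_i μ_{n+1-i}. -/
open Matrix Finset

/-!
Put `U = P X Qᵀ`, an orthogonal matrix. By cyclicity of the trace,
`tr(Xᵀ L X W) = tr(diag l · U · diag m · Uᵀ) = lᵀ (U ⊙ U) m`, and the Hadamard square `U ⊙ U`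
of an orthogonal matrix is doubly stochastic. By Birkhoff's theorem the doubly stochastic matrices
are the convex hull of the permutation matrices, so the linear functional `S ↦ lᵀ S m` is bounded
below on them by its minimum over permutations, `min_σ ∑ l i * m (σ i)`; by the rearrangement
inequality this minimum is attained at the order-reversing pairing.
-/

theorem Fin.sum_mul_rev_le_sum_mul_comp_perm {R : Type*} [CommRing R] [LinearOrder R]
    [IsStrictOrderedRing R] {n : ℕ} {f g : Fin n → R} (hf : Monotone f) (hg : Monotone g)
    (σ : Equiv.Perm (Fin n)) : ∑ i, f i * g i.rev ≤ ∑ i, f i * g (σ i) := by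
  have hanti : Antivary f (g ∘ Fin.rev) := hf.antivary (hg.comp_antitone Fin.rev_anti)
  simpa using hanti.sum_mul_le_sum_mul_comp_perm (σ := σ.trans Fin.revPerm)

namespace Matrix

variable {R n : Type*} [Fintype n]

theorem le_of_mem_doublyStochastic_of_forall_le_permMatrix [DecidableEq n] [Field R]
    [LinearOrder R] [IsStrictOrderedRing R] {f : Matrix n n R → R} (hf : IsLinearMap R f) {c : R}
    (hperm : ∀ σ : Equiv.Perm n, c ≤ f (σ.permMatrix R)) {S : Matrix n n R}
    (hS : S ∈ doublyStochastic R n) : c ≤ f S := by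
  rw [← SetLike.mem_coe, doublyStochastic_eq_convexHull_permMatrix] at hS
  refine convexHull_min ?_ (convex_halfSpace_ge hf c) hS
  rintro _ ⟨σ, rfl⟩
  exact hperm σ

theorem isLinearMap_dotProduct_mulVec [CommSemiring R] (u v : n → R) :
    IsLinearMap R fun S : Matrix n n R => u ⬝ᵥ S *ᵥ v where
  map_add A B := by simp only [add_mulVec, dotProduct_add]
  map_smul c A := by simp only [smul_mulVec, dotProduct_smul]

theorem hadamard_self_mem_doublyStochastic [DecidableEq n] [CommRing R] [LinearOrder R]
    [IsStrictOrderedRing R] {U : Matrix n n R} (hU : Uᵀ * U = 1) :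
    U ⊙ U ∈ doublyStochastic R n := by
  have hU' : U * Uᵀ = 1 := mul_eq_one_comm.mp hU
  refine mem_doublyStochastic_iff_sum.2 ⟨fun i j => mul_self_nonneg _, fun i => ?_, fun j => ?_⟩
  · simpa [mul_apply] using congrFun (congrFun hU' i) i
  · simpa [mul_apply] using congrFun (congrFun hU j) j

theorem trace_diagonal_mul_mul_diagonal_mul_transpose [DecidableEq n] [CommSemiring R]
    (U : Matrix n n R) (v w : n → R) :
    trace (diagonal v * U * diagonal w * Uᵀ) = v ⬝ᵥ (U ⊙ U) *ᵥ w := by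
  rw [dotProduct_mulVec, dotProduct_vecMul_hadamard, transpose_mul, diagonal_transpose, mul_assoc]

end Matrix

/-- Let `L` and `W` be real symmetric `n × n` matrices with eigenvalues
`λ 0 ≤ ... ≤ λ (n-1)` and `μ 0 ≤ ... ≤ μ (n-1)` (expressed via the spectral theorem:
`L = Pᵀ * diagonal l * P`, `W = Qᵀ * diagonal m * Q` with `P, Q` orthogonal and
`l, m` monotone). Then for every orthogonal matrix `X`,
`tr(Xᵀ L X W) ≥ ∑ i, λ_i * μ_{n+1-i}` (the reversed pairing). -/
theorem stmt3 (n : ℕ) (L W : Matrix (Fin n) (Fin n) ℝ)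
    (l m : Fin n → ℝ) (hl : Monotone l) (hm : Monotone m)
    (P Q : Matrix (Fin n) (Fin n) ℝ)
    (hP : Pᵀ * P = 1) (hQ : Qᵀ * Q = 1)
    (hLdiag : L = Pᵀ * Matrix.diagonal l * P)
    (hWdiag : W = Qᵀ * Matrix.diagonal m * Q)
    (X : Matrix (Fin n) (Fin n) ℝ) (hX : Xᵀ * X = 1) :
    ∑ i : Fin n, l i * m i.rev ≤ (Xᵀ * L * X * W).trace := by
  subst hLdiag hWdiag
  set U := P * X * Qᵀ
  have hU : Uᵀ * U = 1 := by
    simp only [U, transpose_mul, transpose_transpose, Matrix.mul_assoc]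
    rw [← Matrix.mul_assoc Pᵀ P, hP, Matrix.one_mul, ← Matrix.mul_assoc Xᵀ X, hX,
      Matrix.one_mul, mul_eq_one_comm.mp hQ]
  have htrace : (Xᵀ * (Pᵀ * diagonal l * P) * X * (Qᵀ * diagonal m * Q)).trace
      = trace (diagonal l * U * diagonal m * Uᵀ) := by
    rw [trace_mul_comm _ Uᵀ]
    simp only [U, transpose_mul, transpose_transpose, Matrix.mul_assoc]
    rw [trace_mul_comm Q]
    simp only [Matrix.mul_assoc]
  rw [htrace, trace_diagonal_mul_mul_diagonal_mul_transpose]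
  refine le_of_mem_doublyStochastic_of_forall_le_permMatrix
    (isLinearMap_dotProduct_mulVec l m) (fun σ => ?_) (hadamard_self_mem_doublyStochastic hU)
  rw [permMatrix_mulVec]
  exact Fin.sum_mul_rev_le_sum_mul_comp_perm hl hm σ
end

section
/- Let L be a real symmetric positive semidefinite n×n matrix with eigenvalues λ_1 ≤ ... ≤ λ_n, and let W be a real symmetric positive semidefinite n×n matrix of rank k whose nonzero eigenvalues are all at least m > 0. Then for every orthogonal matrix X, tr(X^T L X W) ≥ m · Σ_{i=1}^k λ_i. -/
/-!
Write `L = Pᵀ diag(l) P` and `W = Qᵀ diag(μ) Q`. With the orthogonal matrix `Y = P X Qᵀ`,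
`tr(Xᵀ L X W) = ∑ⱼ μⱼ ∑ᵢ lᵢ Yᵢⱼ²`. Bounding each nonzero `μⱼ` below by `m` leaves
`m ∑ᵢ lᵢ cᵢ` with weights `cᵢ = ∑_{μⱼ ≠ 0} Yᵢⱼ²`; these lie in `[0, 1]` (rows of `Y` are unit
vectors) and sum to `k` (so are its columns). Among such weightings `∑ᵢ lᵢ cᵢ` is smallest when
all the weight sits on the `k` smallest `lᵢ`.
-/

open Matrix Finset

section WeightedSum

variable {ι : Type*} [Fintype ι]

theorem sum_le_sum_mul_of_forall_le_of_notMem (s : Finset ι) (l c : ι → ℝ)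
    (hsep : ∀ i ∈ s, ∀ j ∉ s, l i ≤ l j)
    (hc0 : ∀ i, 0 ≤ c i) (hc1 : ∀ i, c i ≤ 1) (hcs : ∑ i, c i = #s) :
    ∑ i ∈ s, l i ≤ ∑ i, l i * c i := by
  classical
  rcases s.eq_empty_or_nonempty with rfl | hs
  · have hc : c = 0 := (Fintype.sum_eq_zero_iff_of_nonneg hc0).1 (by simpa using hcs)
    simp [hc]
  obtain ⟨i₀, hi₀, hmax⟩ := s.exists_max_image l hs
  set t := l i₀
  -- `t` separates the values of `l` on `s` from those off `s`.
  have hin : ∑ i ∈ s, (l i - t) ≤ ∑ i ∈ s, (l i - t) * c i :=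
    sum_le_sum fun i hi => by nlinarith [hmax i hi, hc1 i]
  have hout : 0 ≤ ∑ i ∈ univ \ s, (l i - t) * c i :=
    sum_nonneg fun j hj =>
      mul_nonneg (sub_nonneg.2 (hsep i₀ hi₀ j (by simpa using hj))) (hc0 j)
  have hsplit := sum_sdiff (subset_univ s) (f := fun i => (l i - t) * c i)
  have hs_sub : ∑ i ∈ s, (l i - t) = ∑ i ∈ s, l i - #s * t := by
    simp [sum_sub_distrib]
  have huniv_sub : ∑ i, (l i - t) * c i = ∑ i, l i * c i - t * ∑ i, c i := by
    simp [sub_mul, sum_sub_distrib, mul_sum]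
  rw [hcs] at huniv_sub
  linarith

theorem mul_sum_filter_ne_zero_le_sum_mul {m : ℝ} {μ a : ι → ℝ}
    (hμm : ∀ j, μ j ≠ 0 → m ≤ μ j) (ha : ∀ j, 0 ≤ a j) :
    m * ∑ j ∈ univ.filter (μ · ≠ 0), a j ≤ ∑ j, μ j * a j := by
  rw [← sum_filter_of_ne (p := (μ · ≠ 0)) fun j _ h => left_ne_zero_of_mul h, mul_sum]
  exact sum_le_sum fun j hj => mul_le_mul_of_nonneg_right (hμm j (mem_filter.1 hj).2) (ha j)

end WeightedSum

section Orthogonal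

variable {n : Type*} [Fintype n]

theorem sum_sq_apply_eq_one_of_transpose_mul_self [DecidableEq n] {Y : Matrix n n ℝ}
    (hY : Yᵀ * Y = 1) (j : n) : ∑ i, Y i j ^ 2 = 1 := by
  simpa [mul_apply, sq] using congr_fun₂ hY j j

theorem sum_le_sum_mul_sum_sq_of_transpose_mul_self [DecidableEq n] {Y : Matrix n n ℝ}
    (hY : Yᵀ * Y = 1) {s S : Finset n} (hcard : #S = #s) {l : n → ℝ}
    (hsep : ∀ i ∈ s, ∀ j ∉ s, l i ≤ l j) :
    ∑ i ∈ s, l i ≤ ∑ i, l i * ∑ j ∈ S, Y i j ^ 2 := by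
  have hrow (i : n) : ∑ j, Y i j ^ 2 = 1 := by
    simpa using sum_sq_apply_eq_one_of_transpose_mul_self
      (Y := Yᵀ) (by simpa using mul_eq_one_comm.mp hY) i
  refine sum_le_sum_mul_of_forall_le_of_notMem s l _ hsep
    (fun i => sum_nonneg fun j _ => sq_nonneg _) (fun i => ?_) ?_
  · exact (hrow i).symm ▸ sum_le_univ_sum_of_nonneg fun j => sq_nonneg _
  · rw [sum_comm, ← hcard]
    simp [sum_sq_apply_eq_one_of_transpose_mul_self hY]

theorem trace_transpose_mul_diagonal_mul_mul_diagonal [DecidableEq n] {R : Type*}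
    [CommSemiring R] (Y : Matrix n n R) (l μ : n → R) :
    (Yᵀ * diagonal l * Y * diagonal μ).trace = ∑ j, μ j * ∑ i, l i * Y i j ^ 2 := by
  simp only [trace, Matrix.diag, mul_apply, transpose_apply, diagonal_apply,
    mul_ite, mul_zero, sum_ite_eq', mem_univ, if_true, mul_sum, sum_mul]
  exact sum_congr rfl fun j _ => sum_congr rfl fun i _ => by ring

theorem trace_transpose_mul_conj_mul_mul_conj {R : Type*} [CommSemiring R]
    (X P Q D E : Matrix n n R) :
    (Xᵀ * (Pᵀ * D * P) * X * (Qᵀ * E * Q)).trace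
      = ((P * X * Qᵀ)ᵀ * D * (P * X * Qᵀ) * E).trace := by
  rw [show Xᵀ * (Pᵀ * D * P) * X * (Qᵀ * E * Q) = Xᵀ * Pᵀ * D * P * X * Qᵀ * E * Q by
    simp only [Matrix.mul_assoc], trace_mul_comm]
  simp only [transpose_mul, transpose_transpose, Matrix.mul_assoc]

end Orthogonal

theorem stmt4_general (n k : ℕ) (m : ℝ) (hm : 0 < m)
    (L W : Matrix (Fin n) (Fin n) ℝ)
    (l μ : Fin n → ℝ) (hl : Monotone l) (hl0 : ∀ i, 0 ≤ l i)
    (P Q : Matrix (Fin n) (Fin n) ℝ)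
    (hP : Pᵀ * P = 1) (hQ : Qᵀ * Q = 1)
    (hLdiag : L = Pᵀ * Matrix.diagonal l * P)
    (hWdiag : W = Qᵀ * Matrix.diagonal μ * Q)
    (hμm : ∀ i, μ i ≠ 0 → m ≤ μ i)
    (hrank : (Finset.univ.filter (fun i => μ i ≠ 0)).card = k)
    (X : Matrix (Fin n) (Fin n) ℝ) (hX : Xᵀ * X = 1) :
    m * ∑ i ∈ Finset.univ.filter (fun i : Fin n => (i : ℕ) < k), l i
      ≤ (Xᵀ * L * X * W).trace := by
  set Y := P * X * Qᵀ
  have hY : Yᵀ * Y = 1 := by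
    rw [← mem_orthogonalGroup_iff'] at hP hQ hX ⊢
    exact mul_mem (mul_mem hP hX) (Unitary.star_mem hQ)
  have hk : k ≤ n := hrank ▸ (card_filter_le _ _).trans_eq (card_fin n)
  have hlow : ∑ i ∈ univ.filter (fun i : Fin n => (i : ℕ) < k), l i
      ≤ ∑ i, l i * ∑ j ∈ univ.filter (μ · ≠ 0), Y i j ^ 2 :=
    sum_le_sum_mul_sum_sq_of_transpose_mul_self hY
      (by rw [hrank, Fin.card_filter_val_lt, min_eq_right hk])
      fun i hi j hj => hl <| Fin.le_def.2 <| by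
        simp only [mem_filter, mem_univ, true_and] at hi hj
        omega
  calc m * ∑ i ∈ univ.filter (fun i : Fin n => (i : ℕ) < k), l i
      ≤ m * ∑ i, l i * ∑ j ∈ univ.filter (μ · ≠ 0), Y i j ^ 2 :=
        mul_le_mul_of_nonneg_left hlow hm.le
    _ = m * ∑ j ∈ univ.filter (μ · ≠ 0), ∑ i, l i * Y i j ^ 2 := by
        simp_rw [mul_sum]
        rw [sum_comm]
    _ ≤ ∑ j, μ j * ∑ i, l i * Y i j ^ 2 :=
        mul_sum_filter_ne_zero_le_sum_mul hμm
          fun j => sum_nonneg fun i _ => mul_nonneg (hl0 i) (sq_nonneg _)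
    _ = (Xᵀ * L * X * W).trace := by
        rw [hLdiag, hWdiag, trace_transpose_mul_conj_mul_mul_conj,
          trace_transpose_mul_diagonal_mul_mul_diagonal]

/-- Let `L` be a real symmetric PSD `n × n` matrix with eigenvalues
`λ 0 ≤ ... ≤ λ (n-1)` (via the spectral theorem: `L = Pᵀ * diagonal l * P`, `P`
orthogonal, `l` monotone nonnegative), and let `W` be a real symmetric PSD matrix
of rank `k` whose nonzero eigenvalues are all at least `m > 0`
(`W = Qᵀ * diagonal μ * Q`, exactly `k` of the `μ i` nonzero, each nonzero one `≥ m`).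
Then for every orthogonal matrix `X`, `tr(Xᵀ L X W) ≥ m * ∑_{i=1}^k λ_i`,
the sum being over the `k` smallest eigenvalues of `L`. -/
theorem stmt4 (n k : ℕ) (hk : k ≤ n) (m : ℝ) (hm : 0 < m)
    (L W : Matrix (Fin n) (Fin n) ℝ)
    (l μ : Fin n → ℝ) (hl : Monotone l) (hl0 : ∀ i, 0 ≤ l i)
    (P Q : Matrix (Fin n) (Fin n) ℝ)
    (hP : Pᵀ * P = 1) (hQ : Qᵀ * Q = 1)
    (hLdiag : L = Pᵀ * Matrix.diagonal l * P)
    (hWdiag : W = Qᵀ * Matrix.diagonal μ * Q)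
    (hμ0 : ∀ i, 0 ≤ μ i)
    (hμm : ∀ i, μ i ≠ 0 → m ≤ μ i)
    (hrank : (Finset.univ.filter (fun i => μ i ≠ 0)).card = k)
    (X : Matrix (Fin n) (Fin n) ℝ) (hX : Xᵀ * X = 1) :
    m * ∑ i ∈ Finset.univ.filter (fun i : Fin n => (i : ℕ) < k), l i
      ≤ (Xᵀ * L * X * W).trace :=
  stmt4_general n k m hm L W l μ hl hl0 P Q hP hQ hLdiag hWdiag hμm hrank X hX
end

section
/- Let T be the i×i symmetric tridiagonal matrix with diagonal (4,4,...,4) with the bottom-right corner entry replaced by 2, and off-diagonal entries −2. Then its eigenvalues are 4 − 4cos(π(2j+1)/(2i+1)) for j = 0, ..., i−1. -/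
open Matrix Polynomial Finset Real

private lemma evalCharpoly {n : Type*} [Fintype n] [DecidableEq n] (M : Matrix n n ℝ) (t : ℝ) :
    M.charpoly.eval t = (Matrix.diagonal (fun _ => t) - M).det := by
  rw [Matrix.charpoly, ← Polynomial.coe_evalRingHom, RingHom.map_det]
  congr 1
  ext a b
  by_cases h : a = b
  · subst h
    simp [Matrix.charmatrix_apply_eq, Matrix.diagonal_apply_eq]
  · simp [Matrix.charmatrix_apply_ne _ _ _ h, Matrix.diagonal_apply_ne _ h]

/-- Let `T` be the `i × i` symmetric tridiagonal matrix with diagonal `(4, ..., 4, 2)`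
(all `4` except the bottom-right corner which is `2`) and off-diagonal entries `-2`.
Then its eigenvalues are `4 - 4 cos(π (2j + 1) / (2i + 1))` for `j = 0, ..., i - 1`. -/
theorem stmt12 (i : ℕ) (T : Matrix (Fin i) (Fin i) ℝ)
    (hT : T = Matrix.of (fun a b : Fin i =>
      if a = b then (if (a : ℕ) + 1 = i then (2 : ℝ) else 4)
      else if (a : ℕ) + 1 = (b : ℕ) ∨ (b : ℕ) + 1 = (a : ℕ) then (-2 : ℝ) else 0)) :
    T.charpoly = ∏ j ∈ Finset.range i,
      (Polynomial.X - Polynomial.C (4 - 4 * Real.cos (Real.pi * (2 * j + 1) / (2 * i + 1)))) := by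
  rcases Nat.eq_zero_or_pos i with hi0 | hi
  · subst hi0
    simp [Matrix.charpoly, Matrix.det_isEmpty]
  set θ : ℕ → ℝ := fun j => Real.pi * (2 * j + 1) / (2 * i + 1) with hθdef
  set μ : ℕ → ℝ := fun j => 4 - 4 * Real.cos (θ j) with hμdef
  have h2i : (0:ℝ) < 2 * i + 1 := by positivity
  have hθpos : ∀ j : ℕ, 0 < θ j := by
    intro j
    apply div_pos (by positivity) h2i
  have hθlt : ∀ j < i, θ j < Real.pi := by
    intro j hj
    rw [hθdef]
    simp only
    rw [div_lt_iff₀ h2i]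
    have hji : (j:ℝ) < i := by exact_mod_cast hj
    nlinarith [Real.pi_pos]
  -- the eigenvalues are pairwise distinct
  have hθmono : ∀ j1 j2 : ℕ, j1 < j2 → θ j1 < θ j2 := by
    intro j1 j2 h
    rw [hθdef]
    simp only
    rw [div_lt_div_iff_of_pos_right h2i]
    have : (j1:ℝ) < j2 := by exact_mod_cast h
    nlinarith [Real.pi_pos]
  have hinj : ∀ j1 < i, ∀ j2 < i, j1 ≠ j2 → μ j1 ≠ μ j2 := by
    have key : ∀ j1 j2, j1 < j2 → j2 < i → μ j1 < μ j2 := by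
      intro j1 j2 h12 h2
      have : Real.cos (θ j2) < Real.cos (θ j1) :=
        Real.cos_lt_cos_of_nonneg_of_le_pi (hθpos j1).le (hθlt j2 h2).le (hθmono _ _ h12)
      rw [hμdef]
      simp only
      linarith
    intro j1 h1 j2 h2 hne
    rcases Nat.lt_or_ge j1 j2 with h | h
    · exact ne_of_lt (key j1 j2 h h2)
    · exact (ne_of_lt (key j2 j1 (lt_of_le_of_ne h (Ne.symm hne)) h1)).symm
  -- each μ j is a root of the characteristic polynomial
  have hroot : ∀ j < i, T.charpoly.IsRoot (μ j) := by
    intro j hj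
    set t := θ j with htdef
    set w : ℕ → ℝ := fun k => Real.sin (k * t) with hwdef
    have hw0 : w 0 = 0 := by simp [hwdef]
    have htrig : ∀ k : ℕ, w k + w (k + 2) = 2 * Real.cos t * w (k + 1) := by
      intro k
      rw [hwdef]
      simp only
      push_cast
      have h1 : ((k:ℝ)+2)*t = (((k:ℝ)+1)*t) + t := by ring
      have h2 : (k:ℝ)*t = (((k:ℝ)+1)*t) - t := by ring
      rw [h1, h2, Real.sin_add, Real.sin_sub]
      ring
    have hrefl : w (i + 1) = w i := by
      rw [hwdef]
      simp only
      have key : ((i:ℕ)+1 : ℝ)*t = ((2*j+1:ℕ):ℝ)*Real.pi - (i:ℝ)*t := by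
        rw [htdef, hθdef]
        push_cast
        field_simp
        ring
      push_cast
      rw [key, Real.sin_sub, Real.sin_nat_mul_pi]
      have hc : ((2*j+1:ℕ):ℝ)*Real.pi = (j:ℕ) * (2 * Real.pi) + Real.pi := by push_cast; ring
      rw [hc, Real.cos_nat_mul_two_pi_add_pi]
      ring
    -- the eigenvector
    set v : Fin i → ℝ := fun k => w ((k:ℕ) + 1) with hvdef
    have hvne : v ≠ 0 := by
      intro h
      have h0 := congrFun h ⟨0, hi⟩
      have : Real.sin t > 0 := Real.sin_pos_of_pos_of_lt_pi (hθpos j) (hθlt j hj)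
      rw [hvdef] at h0
      simp [hwdef] at h0
      exact this.ne' h0
    -- the sum in each row
    have hsum : ∀ a : Fin i, (∑ b : Fin i, T a b * v b)
        = 4 * w ((a:ℕ)+1) - 2 * w (a:ℕ) - 2 * w ((a:ℕ)+2) := by
      intro a
      have hsplit : ∀ b : Fin i, T a b * v b =
          (if b = a then (if (a:ℕ)+1 = i then (2:ℝ) else 4) * v a else 0)
        + ((if (b:ℕ) = (a:ℕ)+1 then (-2:ℝ) * v b else 0)
        + (if (b:ℕ)+1 = (a:ℕ) then (-2:ℝ) * v b else 0)) := by
        intro b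
        simp only [hT, Matrix.of_apply]
        rcases eq_or_ne a b with h1 | h1
        · subst h1
          rw [if_pos rfl, if_pos rfl,
            if_neg (show ¬((a:ℕ) = (a:ℕ)+1) by omega),
            if_neg (show ¬((a:ℕ)+1 = (a:ℕ)) by omega)]
          ring
        · rw [if_neg h1, if_neg (fun hh : b = a => h1 hh.symm)]
          by_cases h2 : (a:ℕ)+1 = (b:ℕ)
          · rw [if_pos (Or.inl h2), if_pos (show (b:ℕ) = (a:ℕ)+1 from h2.symm),
              if_neg (show ¬((b:ℕ)+1 = (a:ℕ)) by omega)]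
            ring
          · by_cases h3 : (b:ℕ)+1 = (a:ℕ)
            · rw [if_pos (Or.inr h3), if_neg (show ¬((b:ℕ) = (a:ℕ)+1) by omega), if_pos h3]
              ring
            · rw [if_neg (show ¬((a:ℕ)+1 = (b:ℕ) ∨ (b:ℕ)+1 = (a:ℕ)) by tauto),
                if_neg (show ¬((b:ℕ) = (a:ℕ)+1) from fun hh => h2 hh.symm), if_neg h3]
              ring
      rw [Finset.sum_congr rfl (fun b _ => hsplit b), Finset.sum_add_distrib,
        Finset.sum_add_distrib]
      have s1 : (∑ b : Fin i, if b = a then (if (a:ℕ)+1 = i then (2:ℝ) else 4) * v a else 0)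
          = (if (a:ℕ)+1 = i then (2:ℝ) else 4) * v a := by
        rw [Finset.sum_ite_eq' Finset.univ a]
        simp
      have s2 : (∑ b : Fin i, if (b:ℕ) = (a:ℕ)+1 then (-2:ℝ) * v b else 0)
          = (if (a:ℕ)+1 = i then 0 else (-2:ℝ) * w ((a:ℕ)+2)) := by
        by_cases h : (a:ℕ)+1 = i
        · rw [if_pos h, Finset.sum_eq_zero]
          intro b _
          rw [if_neg]
          omega
        · have hlt : (a:ℕ)+1 < i := by omega
          rw [if_neg h]
          rw [Finset.sum_eq_single (⟨(a:ℕ)+1, hlt⟩ : Fin i)]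
          · rw [if_pos rfl, hvdef]
          · intro b _ hb
            rw [if_neg]
            intro hh
            exact hb (Fin.ext hh)
          · intro hmem
            exact absurd (Finset.mem_univ _) hmem
      have s3 : (∑ b : Fin i, if (b:ℕ)+1 = (a:ℕ) then (-2:ℝ) * v b else 0)
          = (-2:ℝ) * w (a:ℕ) := by
        by_cases h : (a:ℕ) = 0
        · rw [h, hw0, Finset.sum_eq_zero]
          · ring
          · intro b _
            rw [if_neg]
            omega
        · have hlt : (a:ℕ) - 1 < i := by omega
          rw [Finset.sum_eq_single (⟨(a:ℕ)-1, hlt⟩ : Fin i)]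
          · rw [if_pos (by simp; omega), hvdef]
            simp only
            congr 2
            omega
          · intro b _ hb
            rw [if_neg]
            intro hh
            apply hb
            apply Fin.ext
            simp
            omega
          · intro hmem
            exact absurd (Finset.mem_univ _) hmem
      rw [s1, s2, s3]
      by_cases h : (a:ℕ)+1 = i
      · have hww : w ((a:ℕ)+2) = w ((a:ℕ)+1) := by
          rw [show (a:ℕ)+2 = i+1 by omega, hrefl]
          congr 1
          omega
        rw [if_pos h, if_pos h, hww, hvdef]
        ring
      · rw [if_neg h, if_neg h, hvdef]
        ring
    -- the matrix kills v
    have hmv : (Matrix.diagonal (fun _ => μ j) - T) *ᵥ v = 0 := by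
      funext a
      rw [Matrix.sub_mulVec, Pi.sub_apply, Matrix.mulVec_diagonal, Pi.zero_apply]
      have : T *ᵥ v = fun a => ∑ b : Fin i, T a b * v b := rfl
      rw [this]
      simp only
      rw [hsum a]
      have ht := htrig (a:ℕ)
      have hva : v a = w ((a:ℕ)+1) := rfl
      rw [hva, hμdef]
      simp only [← htdef]
      nlinarith [ht]
    have hdet : (Matrix.diagonal (fun _ => μ j) - T).det = 0 :=
      Matrix.exists_mulVec_eq_zero_iff.mp ⟨v, hvne, hmv⟩
    rw [Polynomial.IsRoot, evalCharpoly, hdet]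
  -- assemble: the charpoly is monic of degree i with i distinct roots
  set P : Polynomial ℝ := ∏ j ∈ Finset.range i, (Polynomial.X - Polynomial.C (μ j)) with hPdef
  have hPmonic : P.Monic := Polynomial.monic_prod_of_monic _ _ (fun j _ => Polynomial.monic_X_sub_C _)
  have hPdeg : P.natDegree = i := by
    rw [hPdef, Polynomial.natDegree_prod _ _ (fun j _ => Polynomial.X_sub_C_ne_zero _)]
    simp [Polynomial.natDegree_X_sub_C]
  have hcmonic : T.charpoly.Monic := T.charpoly_monic
  have hcdeg : T.charpoly.natDegree = i := by
    rw [T.charpoly_natDegree_eq_dim, Fintype.card_fin]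
  have hdvd : P ∣ T.charpoly := by
    apply Finset.prod_dvd_of_coprime
    · intro a ha b hb hab
      exact Polynomial.isCoprime_X_sub_C_of_isUnit_sub
        (IsUnit.mk0 _ (sub_ne_zero_of_ne
          (hinj a (Finset.mem_range.mp ha) b (Finset.mem_range.mp hb) hab)))
    · intro a ha
      rw [Polynomial.dvd_iff_isRoot]
      exact hroot a (Finset.mem_range.mp ha)
  have := Polynomial.eq_of_monic_of_dvd_of_natDegree_le hPmonic hcmonic hdvd
    (by rw [hPdeg, hcdeg])
  rw [this, hPdef]
end
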